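/- arXiv:2503.17816 — 7 statements merged into one kernel-verified Lean document; each statement's English description precedes it below -/
import Mathlib

section
/- Let h : ℝ → ℝ be continuously differentiable and let Φ : ℝ → ℝ be twice differentiable and positive on an open interval I with h(x) ≠ Φ(x)² for all x ∈ I. Suppose Φ satisfies on I the equation Φ'' = (3Φ² + h)/(Φ² − h) · (Φ')²/Φ − h'·Φ'/(Φ² − h) + (Φ⁴ − h²)/Φ. Then for fixed x₀ ∈ I the function u_top(x) = exp(∫_{x₀}^x Φ(ξ)·(Φ'(ξ) − √((h(ξ)−Φ(ξ)²)² + Φ'(ξ)²))/(h(ξ)−Φ(ξ)²) dξ) satisfies u_top''(x) + h(x)·u_top(x) = 0 for all x ∈ I. -/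
/-!
Write `u = exp F` with `F' = g`. Then `u'' + h u = (g' + g² + h) u`, so `u'' + h u = 0` exactly
when `g` solves the Riccati equation `g' = -g² - h`. For
`g = Φ (Φ' - √((h - Φ²)² + Φ'²)) / (h - Φ²)` this Riccati equation is an algebraic
consequence of the geodesic equation for `Φ` and of `(√w)² = w`.
-/

open Real Set Filter Topology intervalIntegral

theorem hasDerivAt_integral_of_continuousOn {g : ℝ → ℝ} {s : Set ℝ} {a x : ℝ}
    (hs : IsOpen s) (hs' : s.OrdConnected) (hg : ContinuousOn g s) (ha : a ∈ s) (hx : x ∈ s) :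
    HasDerivAt (fun t => ∫ ξ in a..t, g ξ) (g x) x :=
  integral_hasDerivAt_right (hg.mono (hs'.uIcc_subset ha hx)).intervalIntegrable
    (hg.stronglyMeasurableAtFilter hs x hx) (hg.continuousAt (hs.mem_nhds hx))

theorem deriv_deriv_exp_add_mul_eq_zero_of_riccati {F g : ℝ → ℝ} {c x : ℝ}
    (hF : ∀ᶠ y in 𝓝 x, HasDerivAt F (g y) y) (hg : HasDerivAt g (-g x ^ 2 - c) x) :
    deriv (deriv fun y => exp (F y)) x + c * exp (F x) = 0 := by
  have hu' : deriv (fun y => exp (F y)) =ᶠ[𝓝 x] fun y => exp (F y) * g y :=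
    hF.mono fun y hy => hy.exp.deriv
  rw [hu'.deriv_eq, (hF.self_of_nhds.exp.fun_mul hg).deriv]
  ring

theorem HasDerivAt.sqrt_sq_add_sq {f g : ℝ → ℝ} {f' g' x : ℝ} (hf : HasDerivAt f f' x)
    (hg : HasDerivAt g g' x) (hx : f x ^ 2 + g x ^ 2 ≠ 0) :
    HasDerivAt (fun y => √(f y ^ 2 + g y ^ 2))
      ((f x * f' + g x * g') / √(f x ^ 2 + g x ^ 2)) x := by
  convert ((hf.fun_pow 2).fun_add (hg.fun_pow 2)).sqrt hx using 1
  field_simp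
  norm_num
  ring

noncomputable def riccatiSlope (h Φ : ℝ → ℝ) (ξ : ℝ) : ℝ :=
  Φ ξ * (deriv Φ ξ - √((h ξ - Φ ξ ^ 2) ^ 2 + deriv Φ ξ ^ 2)) / (h ξ - Φ ξ ^ 2)

-- With `p, q, r = Φ, Φ', Φ''`, `H, H' = h, h'` and `s = √((h - Φ²)² + Φ'²)`, the left side is the
-- derivative of `riccatiSlope h Φ` and the right side is `-(riccatiSlope h Φ)² - h`.
theorem riccati_identity_of_geodesic {p q r H H' s : ℝ} (hp : p ≠ 0) (hD : H - p ^ 2 ≠ 0)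
    (hs : s ≠ 0) (hs2 : s ^ 2 = (H - p ^ 2) ^ 2 + q ^ 2)
    (hr : r = (3 * p ^ 2 + H) / (p ^ 2 - H) * q ^ 2 / p - H' * q / (p ^ 2 - H)
        + (p ^ 4 - H ^ 2) / p) :
    ((q * (q - s) + p * (r - ((H - p ^ 2) * (H' - 2 * p * q) + q * r) / s)) * (H - p ^ 2)
        - p * (q - s) * (H' - 2 * p * q)) / (H - p ^ 2) ^ 2
      = -(p * (q - s) / (H - p ^ 2)) ^ 2 - H := by
  have hD' : p ^ 2 - H ≠ 0 := by rwa [← neg_sub, neg_ne_zero]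
  have hr' : p * (p ^ 2 - H) * r
      = (3 * p ^ 2 + H) * q ^ 2 - p * H' * q + (p ^ 2 - H) ^ 2 * (p ^ 2 + H) := by
    rw [hr]; field_simp; ring
  rw [← sub_eq_zero, div_sub' (pow_ne_zero 2 hD), div_eq_zero_iff]
  left
  field_simp
  linear_combination
    (-q * (H - p ^ 2) + p * H' - 4 * p ^ 2 * q + p ^ 2 * s) * hs2 + (q - s) * hr'

theorem riccatiSlope_hasDerivAt {h Φ : ℝ → ℝ} {x : ℝ} (hh : DifferentiableAt ℝ h x)
    (hΦ : DifferentiableAt ℝ Φ x) (hΦ' : DifferentiableAt ℝ (deriv Φ) x) (hΦ0 : Φ x ≠ 0)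
    (hne : h x ≠ Φ x ^ 2)
    (hgeo : deriv (deriv Φ) x =
        (3 * Φ x ^ 2 + h x) / (Φ x ^ 2 - h x) * deriv Φ x ^ 2 / Φ x
          - deriv h x * deriv Φ x / (Φ x ^ 2 - h x) + (Φ x ^ 4 - h x ^ 2) / Φ x) :
    HasDerivAt (riccatiSlope h Φ) (-riccatiSlope h Φ x ^ 2 - h x) x := by
  have hD : HasDerivAt (fun y => h y - Φ y ^ 2) (deriv h x - 2 * Φ x * deriv Φ x) x :=
    (hh.hasDerivAt.fun_sub (hΦ.hasDerivAt.fun_pow 2)).congr_deriv (by norm_num)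
  have hD0 : h x - Φ x ^ 2 ≠ 0 := sub_ne_zero.mpr hne
  have hw : 0 < (h x - Φ x ^ 2) ^ 2 + deriv Φ x ^ 2 := by positivity
  have hS := hD.sqrt_sq_add_sq hΦ'.hasDerivAt hw.ne'
  exact ((hΦ.hasDerivAt.fun_mul (hΦ'.hasDerivAt.fun_sub hS)).fun_div hD hD0).congr_deriv
    (riccati_identity_of_geodesic hΦ0 hD0 (sqrt_pos.mpr hw).ne' (sq_sqrt hw.le) hgeo)

theorem stmt_0 (h Φ : ℝ → ℝ) (a b x₀ : ℝ) (hx₀ : x₀ ∈ Set.Ioo a b)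
    (hh : ContDiff ℝ 1 h)
    (hΦ1 : ∀ x ∈ Set.Ioo a b, DifferentiableAt ℝ Φ x)
    (hΦ2 : ∀ x ∈ Set.Ioo a b, DifferentiableAt ℝ (deriv Φ) x)
    (hΦpos : ∀ x ∈ Set.Ioo a b, 0 < Φ x)
    (hne : ∀ x ∈ Set.Ioo a b, h x ≠ (Φ x) ^ 2)
    (hgeo : ∀ x ∈ Set.Ioo a b,
      deriv (deriv Φ) x =
        (3 * (Φ x) ^ 2 + h x) / ((Φ x) ^ 2 - h x) * (deriv Φ x) ^ 2 / Φ x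
          - deriv h x * deriv Φ x / ((Φ x) ^ 2 - h x)
          + ((Φ x) ^ 4 - (h x) ^ 2) / Φ x) :
    ∀ x ∈ Set.Ioo a b,
      deriv (deriv (fun y => Real.exp (∫ ξ in x₀..y,
          Φ ξ * (deriv Φ ξ - Real.sqrt ((h ξ - (Φ ξ) ^ 2) ^ 2 + (deriv Φ ξ) ^ 2))
            / (h ξ - (Φ ξ) ^ 2)))) x
        + h x * Real.exp (∫ ξ in x₀..x,
          Φ ξ * (deriv Φ ξ - Real.sqrt ((h ξ - (Φ ξ) ^ 2) ^ 2 + (deriv Φ ξ) ^ 2))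
            / (h ξ - (Φ ξ) ^ 2)) = 0 := by
  intro x hx
  have hslope : ∀ y ∈ Ioo a b,
      HasDerivAt (riccatiSlope h Φ) (-riccatiSlope h Φ y ^ 2 - h y) y := fun y hy =>
    riccatiSlope_hasDerivAt (hh.differentiable one_ne_zero y) (hΦ1 y hy) (hΦ2 y hy)
      (hΦpos y hy).ne' (hne y hy) (hgeo y hy)
  have hcont : ContinuousOn (riccatiSlope h Φ) (Ioo a b) := fun y hy =>
    (hslope y hy).continuousAt.continuousWithinAt
  have hprim : ∀ᶠ y in 𝓝 x,
      HasDerivAt (fun t => ∫ ξ in x₀..t, riccatiSlope h Φ ξ) (riccatiSlope h Φ y) y :=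
    eventually_of_mem (isOpen_Ioo.mem_nhds hx) fun y hy =>
      hasDerivAt_integral_of_continuousOn isOpen_Ioo ordConnected_Ioo hcont hx₀ hy
  exact deriv_deriv_exp_add_mul_eq_zero_of_riccati hprim (hslope x hx)
end

section
/- Under the same hypotheses (Φ positive, C², solving the geodesic equation on open interval I, h ≠ Φ² on I, h of class C¹), the function u_bot(x) = exp(∫_{x₀}^x Φ(ξ)·(Φ'(ξ) + √((h(ξ)−Φ(ξ)²)² + Φ'(ξ)²))/(h(ξ)−Φ(ξ)²) dξ) satisfies u_bot''(x) + h(x)·u_bot(x) = 0 for all x ∈ I. -/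
/-!
Writing `u = exp (∫ g)` gives `u'' + h u = (g' + g² + h) u`, so it suffices that
`g = Φ (Φ' + S) / (h - Φ²)`, with `S = √((h - Φ²)² + Φ'²)`, solves the Riccati equation
`g' + g² + h = 0`. Differentiating `g` and eliminating `Φ''` with the geodesic equation, this becomes
a polynomial identity modulo the relation `S² = (h - Φ²)² + Φ'²`.
-/

open Set Filter Topology

noncomputable def riccatiCoeff (h Φ : ℝ → ℝ) (ξ : ℝ) : ℝ :=
  Φ ξ * (deriv Φ ξ + √((h ξ - Φ ξ ^ 2) ^ 2 + deriv Φ ξ ^ 2)) / (h ξ - Φ ξ ^ 2)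

theorem deriv_deriv_eq_of_eventually_hasDerivAt_mul {u g : ℝ → ℝ} {x g' : ℝ}
    (hu : ∀ᶠ y in 𝓝 x, HasDerivAt u (g y * u y) y) (hg : HasDerivAt g g' x) :
    deriv (deriv u) x = (g' + g x ^ 2) * u x := by
  have hderiv : deriv u =ᶠ[𝓝 x] fun y => g y * u y := hu.mono fun y hy => hy.deriv
  rw [hderiv.deriv_eq]
  exact (hg.mul hu.self_of_nhds).deriv.trans (by ring)

theorem hasDerivAt_exp_integral {g : ℝ → ℝ} {a b x₀ x : ℝ} (hg : ContinuousOn g (Ioo a b))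
    (hx₀ : x₀ ∈ Ioo a b) (hx : x ∈ Ioo a b) :
    HasDerivAt (fun y => Real.exp (∫ ξ in x₀..y, g ξ))
      (g x * Real.exp (∫ ξ in x₀..x, g ξ)) x := by
  have hint : IntervalIntegrable g MeasureTheory.volume x₀ x :=
    (hg.mono (ordConnected_Ioo.uIcc_subset hx₀ hx)).intervalIntegrable
  have hF := intervalIntegral.integral_hasDerivAt_right hint
    (hg.stronglyMeasurableAtFilter isOpen_Ioo x hx) (hg.continuousAt (isOpen_Ioo.mem_nhds hx))
  simpa only [mul_comm] using hF.exp

theorem continuousAt_riccatiCoeff {h Φ : ℝ → ℝ} {x : ℝ} (hΦ : ContinuousAt Φ x)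
    (hΦ' : ContinuousAt (deriv Φ) x) (hh : ContinuousAt h x) (hne : h x ≠ Φ x ^ 2) :
    ContinuousAt (riccatiCoeff h Φ) x := by
  have hden : ContinuousAt (fun ξ => h ξ - Φ ξ ^ 2) x := hh.sub (hΦ.pow 2)
  exact (hΦ.mul (hΦ'.add ((hden.pow 2).add (hΦ'.pow 2)).sqrt)).div hden (sub_ne_zero.mpr hne)

/-- `g' + g² + H = 0` for `g = P (P₁ + S) / (H - P²)` with `g'` expanded by the quotient rule, where
`P, P₁, P₂, H, H₁` stand for `Φ, Φ', Φ'', h, h'` at a point. -/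
theorem riccati_identity {P P₁ P₂ H H₁ S : ℝ} (hP : P ≠ 0) (hD : H - P ^ 2 ≠ 0) (hS : S ≠ 0)
    (hS2 : S ^ 2 = (H - P ^ 2) ^ 2 + P₁ ^ 2)
    (hgeo : P₂ = (3 * P ^ 2 + H) / (P ^ 2 - H) * P₁ ^ 2 / P
        - H₁ * P₁ / (P ^ 2 - H) + (P ^ 4 - H ^ 2) / P) :
    ((P₁ * (P₁ + S) + P * (P₂ + ((H - P ^ 2) * (H₁ - 2 * P * P₁) + P₁ * P₂) / S)) * (H - P ^ 2)
        - P * (P₁ + S) * (H₁ - 2 * P * P₁)) / (H - P ^ 2) ^ 2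
      + (P * (P₁ + S) / (H - P ^ 2)) ^ 2 + H = 0 := by
  have hD' : P ^ 2 - H ≠ 0 := fun h0 => hD (by linarith)
  subst hgeo
  field_simp
  linear_combination (-(H - P ^ 2) * P ^ 2 * S - (H - P ^ 2) ^ 2 * P₁
    + (H - P ^ 2) * P * (H₁ - 2 * P * P₁) - 2 * (H - P ^ 2) * P ^ 2 * P₁) * hS2

theorem exists_hasDerivAt_riccatiCoeff_add_sq_add_eq_zero {h Φ : ℝ → ℝ} {x : ℝ}
    (hΦ : DifferentiableAt ℝ Φ x) (hΦ' : DifferentiableAt ℝ (deriv Φ) x)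
    (hh : DifferentiableAt ℝ h x) (hΦx : Φ x ≠ 0) (hne : h x ≠ Φ x ^ 2)
    (hgeo : deriv (deriv Φ) x =
        (3 * (Φ x) ^ 2 + h x) / ((Φ x) ^ 2 - h x) * (deriv Φ x) ^ 2 / Φ x
          - deriv h x * deriv Φ x / ((Φ x) ^ 2 - h x)
          + ((Φ x) ^ 4 - (h x) ^ 2) / Φ x) :
    ∃ g', HasDerivAt (riccatiCoeff h Φ) g' x ∧ g' + riccatiCoeff h Φ x ^ 2 + h x = 0 := by
  have hD : h x - Φ x ^ 2 ≠ 0 := sub_ne_zero.mpr hne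
  have hq : 0 < (h x - Φ x ^ 2) ^ 2 + deriv Φ x ^ 2 := by positivity
  have hS : √((h x - Φ x ^ 2) ^ 2 + deriv Φ x ^ 2) ≠ 0 := (Real.sqrt_pos.mpr hq).ne'
  have hDd : HasDerivAt (fun ξ => h ξ - Φ ξ ^ 2) (deriv h x - 2 * Φ x * deriv Φ x) x :=
    (hh.hasDerivAt.sub (hΦ.hasDerivAt.pow 2)).congr_deriv (by ring)
  have hSd : HasDerivAt (fun ξ => √((h ξ - Φ ξ ^ 2) ^ 2 + deriv Φ ξ ^ 2))
      (((h x - Φ x ^ 2) * (deriv h x - 2 * Φ x * deriv Φ x) + deriv Φ x * deriv (deriv Φ) x)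
        / √((h x - Φ x ^ 2) ^ 2 + deriv Φ x ^ 2)) x := by
    refine (((hDd.pow 2).add (hΦ'.hasDerivAt.pow 2)).sqrt hq.ne').congr_deriv ?_
    simp only [Pi.add_apply, Pi.pow_apply]
    field_simp
    ring
  exact ⟨_, (hΦ.hasDerivAt.mul (hΦ'.hasDerivAt.add hSd)).div hDd hD,
    riccati_identity hΦx hD hS (Real.sq_sqrt hq.le) hgeo⟩

theorem stmt_1 (h Φ : ℝ → ℝ) (a b x₀ : ℝ) (hx₀ : x₀ ∈ Set.Ioo a b)
    (hh : ContDiff ℝ 1 h)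
    (hΦ1 : ∀ x ∈ Set.Ioo a b, DifferentiableAt ℝ Φ x)
    (hΦ2 : ∀ x ∈ Set.Ioo a b, DifferentiableAt ℝ (deriv Φ) x)
    (hΦpos : ∀ x ∈ Set.Ioo a b, 0 < Φ x)
    (hne : ∀ x ∈ Set.Ioo a b, h x ≠ (Φ x) ^ 2)
    (hgeo : ∀ x ∈ Set.Ioo a b,
      deriv (deriv Φ) x =
        (3 * (Φ x) ^ 2 + h x) / ((Φ x) ^ 2 - h x) * (deriv Φ x) ^ 2 / Φ x
          - deriv h x * deriv Φ x / ((Φ x) ^ 2 - h x)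
          + ((Φ x) ^ 4 - (h x) ^ 2) / Φ x) :
    ∀ x ∈ Set.Ioo a b,
      deriv (deriv (fun y => Real.exp (∫ ξ in x₀..y,
          Φ ξ * (deriv Φ ξ + Real.sqrt ((h ξ - (Φ ξ) ^ 2) ^ 2 + (deriv Φ ξ) ^ 2))
            / (h ξ - (Φ ξ) ^ 2)))) x
        + h x * Real.exp (∫ ξ in x₀..x,
          Φ ξ * (deriv Φ ξ + Real.sqrt ((h ξ - (Φ ξ) ^ 2) ^ 2 + (deriv Φ ξ) ^ 2))
            / (h ξ - (Φ ξ) ^ 2)) = 0 := by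
  intro x hx
  change deriv (deriv fun y => Real.exp (∫ ξ in x₀..y, riccatiCoeff h Φ ξ)) x
    + h x * Real.exp (∫ ξ in x₀..x, riccatiCoeff h Φ ξ) = 0
  have hhd : Differentiable ℝ h := hh.differentiable one_ne_zero
  have hcont : ContinuousOn (riccatiCoeff h Φ) (Ioo a b) := fun y hy =>
    (continuousAt_riccatiCoeff (hΦ1 y hy).continuousAt (hΦ2 y hy).continuousAt
      hhd.continuous.continuousAt (hne y hy)).continuousWithinAt
  have hu : ∀ᶠ y in 𝓝 x, HasDerivAt (fun y => Real.exp (∫ ξ in x₀..y, riccatiCoeff h Φ ξ))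
      (riccatiCoeff h Φ y * Real.exp (∫ ξ in x₀..y, riccatiCoeff h Φ ξ)) y :=
    eventually_of_mem (isOpen_Ioo.mem_nhds hx) fun y hy => hasDerivAt_exp_integral hcont hx₀ hy
  obtain ⟨g', hg', hriccati⟩ := exists_hasDerivAt_riccatiCoeff_add_sq_add_eq_zero (hΦ1 x hx)
    (hΦ2 x hx) (hhd x) (hΦpos x hx).ne' (hne x hx) (hgeo x hx)
  rw [deriv_deriv_eq_of_eventually_hasDerivAt_mul hu hg', ← add_mul, hriccati, zero_mul]
end

section
/- Let h : ℝ → ℝ be C¹ and let Φ : ℝ → ℝ be positive, C¹ on an open interval I with h(x) ≠ Φ(x)² on I, and suppose Φ solves the geodesic equation Φ'' = (3Φ² + h)/(Φ² − h)·(Φ')²/Φ − h'Φ'/(Φ² − h) + (Φ⁴ − h²)/Φ on I. Then Θ_top(x) = Φ(x)·(Φ'(x) − √((h(x)−Φ(x)²)² + Φ'(x)²))/(h(x)−Φ(x)²) satisfies the Riccati equation Θ'(x) + Θ(x)² + h(x) = 0 on I. -/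
/-!
The quotient `w = Θ_top / Φ` is a root of `(h - Φ²) w² - 2 Φ' w - (h - Φ²) = 0`, so `Θ_top` satisfies
the quadratic relation `(h - Φ²) Θ² - 2 Φ Φ' Θ - (h - Φ²) Φ² = 0` identically. Differentiating this
relation implicitly and eliminating `Φ''` by the geodesic equation gives
`2 (h - Φ²) ((h - Φ²) Θ - Φ Φ') (Θ' + Θ² + h) = 0`, and for the top root the middle factor is
`-Φ √((h - Φ²)² + Φ'²) ≠ 0`.
-/

open Filter Topology

noncomputable def thetaTop (P v H : ℝ) : ℝ :=
  P * (v - √((H - P ^ 2) ^ 2 + v ^ 2)) / (H - P ^ 2)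

theorem thetaTop_quadratic (P v H : ℝ) :
    (H - P ^ 2) * thetaTop P v H ^ 2 - 2 * P * v * thetaTop P v H - (H - P ^ 2) * P ^ 2 = 0 := by
  rcases eq_or_ne (H - P ^ 2) 0 with hu | hu
  · -- division by zero makes `thetaTop` vanish here
    simp [thetaTop, hu]
  have hS := Real.sq_sqrt (by positivity : 0 ≤ (H - P ^ 2) ^ 2 + v ^ 2)
  unfold thetaTop
  field_simp
  linear_combination P ^ 2 * hS

theorem thetaTop_mul_sub_ne {P v H : ℝ} (hP : P ≠ 0) (hu : H ≠ P ^ 2) :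
    (H - P ^ 2) * thetaTop P v H - P * v ≠ 0 := by
  have hu' : H - P ^ 2 ≠ 0 := sub_ne_zero.mpr hu
  have hS : √((H - P ^ 2) ^ 2 + v ^ 2) ≠ 0 := (Real.sqrt_pos.mpr (by positivity)).ne'
  rw [thetaTop, mul_div_cancel₀ _ hu']
  simpa [mul_sub] using mul_ne_zero hP hS

theorem DifferentiableAt.thetaTop {p q k : ℝ → ℝ} {x : ℝ} (hp : DifferentiableAt ℝ p x)
    (hq : DifferentiableAt ℝ q x) (hk : DifferentiableAt ℝ k x) (hu : k x ≠ p x ^ 2) :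
    DifferentiableAt ℝ (fun y => thetaTop (p y) (q y) (k y)) x := by
  have hu' : k x - p x ^ 2 ≠ 0 := sub_ne_zero.mpr hu
  have hS : DifferentiableAt ℝ (fun y => √((k y - p y ^ 2) ^ 2 + q y ^ 2)) x :=
    ((hk.sub (hp.pow 2)).pow 2 |>.add (hq.pow 2)).sqrt
      (add_pos_of_pos_of_nonneg (sq_pos_of_ne_zero hu') (sq_nonneg _)).ne'
  exact (hp.mul (hq.sub hS)).div (hk.sub (hp.pow 2)) hu'

theorem HasDerivAt.implicit_quadratic_relation {p q k Θ : ℝ → ℝ} {x a k' Θ' : ℝ}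
    (hp : HasDerivAt p (q x) x) (hq : HasDerivAt q a x) (hk : HasDerivAt k k' x)
    (hΘ : HasDerivAt Θ Θ' x)
    (hrel : ∀ᶠ y in 𝓝 x,
      (k y - p y ^ 2) * Θ y ^ 2 - 2 * p y * q y * Θ y - (k y - p y ^ 2) * p y ^ 2 = 0) :
    (k' - 2 * p x * q x) * Θ x ^ 2 + 2 * (k x - p x ^ 2) * Θ x * Θ'
      - 2 * (q x ^ 2 + p x * a) * Θ x - 2 * p x * q x * Θ'
      - (k' - 2 * p x * q x) * p x ^ 2 - 2 * (k x - p x ^ 2) * p x * q x = 0 := by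
  have hu := hk.sub (hp.pow 2)
  have hF := ((hu.mul (hΘ.pow 2)).sub (((hp.const_mul 2).mul hq).mul hΘ)).sub (hu.mul (hp.pow 2))
  have h0 := (hasDerivAt_const x (0 : ℝ)).congr_of_eventuallyEq hrel
  have := hF.unique h0
  simp only [Pi.mul_apply, Pi.sub_apply, Pi.pow_apply, Nat.cast_ofNat] at this
  linear_combination this

theorem riccati_of_quadratic_relation {P v H H' a T T' : ℝ} (hP : P ≠ 0) (hu : H ≠ P ^ 2)
    (hnd : (H - P ^ 2) * T - P * v ≠ 0)
    (hrel : (H - P ^ 2) * T ^ 2 - 2 * P * v * T - (H - P ^ 2) * P ^ 2 = 0)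
    (hderiv : (H' - 2 * P * v) * T ^ 2 + 2 * (H - P ^ 2) * T * T' - 2 * (v ^ 2 + P * a) * T
      - 2 * P * v * T' - (H' - 2 * P * v) * P ^ 2 - 2 * (H - P ^ 2) * P * v = 0)
    (ha : a = (3 * P ^ 2 + H) / (P ^ 2 - H) * v ^ 2 / P - H' * v / (P ^ 2 - H)
      + (P ^ 4 - H ^ 2) / P) :
    T' + T ^ 2 + H = 0 := by
  have hu' : H - P ^ 2 ≠ 0 := sub_ne_zero.mpr hu
  have hga : P * (P ^ 2 - H) * a
      = (3 * P ^ 2 + H) * v ^ 2 - H' * P * v + (P ^ 2 - H) ^ 2 * (P ^ 2 + H) := by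
    rw [ha]
    field_simp [sub_ne_zero.mpr hu.symm]
    ring
  have key : (T' + T ^ 2 + H) * (2 * (H - P ^ 2) * ((H - P ^ 2) * T - P * v)) = 0 := by
    linear_combination (H - P ^ 2) * hderiv
      - (H' - 2 * P * v - 2 * (H - P ^ 2) * T - 2 * P * v) * hrel - 2 * T * hga
  simpa [hu', hnd] using key

theorem stmt_2 (h Φ : ℝ → ℝ) (a b : ℝ)
    (hh : ContDiff ℝ 1 h)
    (hΦ1 : ∀ x ∈ Set.Ioo a b, DifferentiableAt ℝ Φ x)
    (hΦ2 : ∀ x ∈ Set.Ioo a b, DifferentiableAt ℝ (deriv Φ) x)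
    (hΦpos : ∀ x ∈ Set.Ioo a b, 0 < Φ x)
    (hne : ∀ x ∈ Set.Ioo a b, h x ≠ (Φ x) ^ 2)
    (hgeo : ∀ x ∈ Set.Ioo a b,
      deriv (deriv Φ) x =
        (3 * (Φ x) ^ 2 + h x) / ((Φ x) ^ 2 - h x) * (deriv Φ x) ^ 2 / Φ x
          - deriv h x * deriv Φ x / ((Φ x) ^ 2 - h x)
          + ((Φ x) ^ 4 - (h x) ^ 2) / Φ x) :
    ∀ x ∈ Set.Ioo a b,
      deriv (fun y => Φ y * (deriv Φ y - Real.sqrt ((h y - (Φ y) ^ 2) ^ 2 + (deriv Φ y) ^ 2))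
          / (h y - (Φ y) ^ 2)) x
        + (Φ x * (deriv Φ x - Real.sqrt ((h x - (Φ x) ^ 2) ^ 2 + (deriv Φ x) ^ 2))
          / (h x - (Φ x) ^ 2)) ^ 2
        + h x = 0 := by
  intro x hx
  have hdh : DifferentiableAt ℝ h x := hh.differentiable one_ne_zero x
  have hΘ := (hΦ1 x hx).thetaTop (hΦ2 x hx) hdh (hne x hx)
  change deriv (fun y => thetaTop (Φ y) (deriv Φ y) (h y)) x + thetaTop (Φ x) (deriv Φ x) (h x) ^ 2
    + h x = 0
  have hP : Φ x ≠ 0 := (hΦpos x hx).ne'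
  have hderiv := (hΦ1 x hx).hasDerivAt.implicit_quadratic_relation (hΦ2 x hx).hasDerivAt
    hdh.hasDerivAt hΘ.hasDerivAt (.of_forall fun y => thetaTop_quadratic _ _ _)
  exact riccati_of_quadratic_relation hP (hne x hx) (thetaTop_mul_sub_ne hP (hne x hx))
    (thetaTop_quadratic _ _ _) hderiv (hgeo x hx)
end

section
/- Let ω > 0. The map from the upper half plane {(x,Φ) : Φ > 0} to ℝ² given by X(x,Φ) = (e^{−2ωx}/(2ω))·(Φ² − ω²)/(Φ² + ω²), Y(x,Φ) = Φ·e^{−2ωx}/(Φ² + ω²) is injective, its image is contained in the upper half plane {(X,Y) : Y > 0}, and its inverse is given by x(X,Y) = −ln(2ω√(X² + Y²))/(2ω), Φ(X,Y) = ω(X + √(X² + Y²))/Y. -/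
lemma stmt_11_aux (ω : ℝ) (hω : 0 < ω) (x Φ : ℝ) (hΦ : 0 < Φ) :
    -Real.log (2 * ω * Real.sqrt ((Real.exp (-2 * ω * x) / (2 * ω) *
        ((Φ ^ 2 - ω ^ 2) / (Φ ^ 2 + ω ^ 2))) ^ 2 +
        (Φ * Real.exp (-2 * ω * x) / (Φ ^ 2 + ω ^ 2)) ^ 2)) / (2 * ω) = x ∧
    ω * ((Real.exp (-2 * ω * x) / (2 * ω) * ((Φ ^ 2 - ω ^ 2) / (Φ ^ 2 + ω ^ 2))) +
        Real.sqrt ((Real.exp (-2 * ω * x) / (2 * ω) *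
        ((Φ ^ 2 - ω ^ 2) / (Φ ^ 2 + ω ^ 2))) ^ 2 +
        (Φ * Real.exp (-2 * ω * x) / (Φ ^ 2 + ω ^ 2)) ^ 2)) /
      (Φ * Real.exp (-2 * ω * x) / (Φ ^ 2 + ω ^ 2)) = Φ := by
  have hs : (0:ℝ) < Φ ^ 2 + ω ^ 2 := by positivity
  have he : (0:ℝ) < Real.exp (-2 * ω * x) := Real.exp_pos _
  have hsum : (Real.exp (-2 * ω * x) / (2 * ω) * ((Φ ^ 2 - ω ^ 2) / (Φ ^ 2 + ω ^ 2))) ^ 2 +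
      (Φ * Real.exp (-2 * ω * x) / (Φ ^ 2 + ω ^ 2)) ^ 2 =
      (Real.exp (-2 * ω * x) / (2 * ω)) ^ 2 := by
    field_simp
    ring
  have hsqrt : Real.sqrt ((Real.exp (-2 * ω * x) / (2 * ω) *
      ((Φ ^ 2 - ω ^ 2) / (Φ ^ 2 + ω ^ 2))) ^ 2 +
      (Φ * Real.exp (-2 * ω * x) / (Φ ^ 2 + ω ^ 2)) ^ 2) =
      Real.exp (-2 * ω * x) / (2 * ω) := by
    rw [hsum, Real.sqrt_sq (by positivity)]
  rw [hsqrt]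
  constructor
  · have : 2 * ω * (Real.exp (-2 * ω * x) / (2 * ω)) = Real.exp (-2 * ω * x) := by
      field_simp
    rw [this, Real.log_exp]
    field_simp
  · rw [div_eq_iff (by positivity)]
    field_simp
    ring

theorem stmt_11 (ω : ℝ) (hω : 0 < ω) :
    let F : ℝ × ℝ → ℝ × ℝ := fun p =>
      (Real.exp (-2 * ω * p.1) / (2 * ω) * ((p.2 ^ 2 - ω ^ 2) / (p.2 ^ 2 + ω ^ 2)),
        p.2 * Real.exp (-2 * ω * p.1) / (p.2 ^ 2 + ω ^ 2))
    Set.InjOn F {p : ℝ × ℝ | 0 < p.2} ∧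
    (∀ p : ℝ × ℝ, 0 < p.2 → 0 < (F p).2) ∧
    (∀ p : ℝ × ℝ, 0 < p.2 →
      -Real.log (2 * ω * Real.sqrt ((F p).1 ^ 2 + (F p).2 ^ 2)) / (2 * ω) = p.1 ∧
      ω * ((F p).1 + Real.sqrt ((F p).1 ^ 2 + (F p).2 ^ 2)) / (F p).2 = p.2) := by
  intro F
  have hinv : ∀ p : ℝ × ℝ, 0 < p.2 →
      -Real.log (2 * ω * Real.sqrt ((F p).1 ^ 2 + (F p).2 ^ 2)) / (2 * ω) = p.1 ∧
      ω * ((F p).1 + Real.sqrt ((F p).1 ^ 2 + (F p).2 ^ 2)) / (F p).2 = p.2 := by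
    intro p hp
    exact stmt_11_aux ω hω p.1 p.2 hp
  refine ⟨?_, ?_, hinv⟩
  · intro p hp q hq hpq
    obtain ⟨hp1, hp2⟩ := hinv p hp
    obtain ⟨hq1, hq2⟩ := hinv q hq
    rw [hpq] at hp1 hp2
    have h1 : p.1 = q.1 := hp1.symm.trans hq1
    have h2 : p.2 = q.2 := hp2.symm.trans hq2
    exact Prod.ext h1 h2
  · intro p hp
    have : (0:ℝ) < p.2 ^ 2 + ω ^ 2 := by positivity
    simp only [F]
    positivity
end

section
/- Let h be continuous and u a nontrivial twice-differentiable solution of u'' + h·u = 0 on ℝ. Define Y(x,Φ) = Φ/(Φ²u(x)² + u'(x)²) on {(x,Φ) : Φ > 0}. Then Y satisfies the partial differential equation (Φ/(h(x) − Φ²) · ∂ₓY)² + (Φ·∂_Φ Y)² = Y² at every point with Φ² ≠ h(x). -/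
/-!
Write `D = Φ² u² + u'²`, so `Y = Φ / D`. Along a solution, `u'' = -h u` gives
`∂ₓ D = 2 u u' (Φ² - h)`, hence `Φ / (h - Φ²) · ∂ₓ Y = 2 Φ² u u' / D²`, while
`Φ · ∂_Φ Y = Φ (u'² - Φ² u²) / D²`. The equation is then the Pythagorean identity
`(2 p q)² + (q² - p²)² = (p² + q²)²` with `p = Φ u`, `q = u'`.
-/

lemma sq_mul_sq_add_sq_pos {Φ a b : ℝ} (hΦ : Φ ≠ 0) (hab : a ≠ 0 ∨ b ≠ 0) :
    0 < Φ ^ 2 * a ^ 2 + b ^ 2 := by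
  rcases hab with ha | hb
  · have : 0 < Φ ^ 2 * a ^ 2 := by positivity
    positivity
  · have : 0 < b ^ 2 := by positivity
    positivity

lemma hasDerivAt_div_sq_mul_sq_add_sq {Φ a b : ℝ} (hD : Φ ^ 2 * a ^ 2 + b ^ 2 ≠ 0) :
    HasDerivAt (fun s => s / (s ^ 2 * a ^ 2 + b ^ 2))
      ((b ^ 2 - Φ ^ 2 * a ^ 2) / (Φ ^ 2 * a ^ 2 + b ^ 2) ^ 2) Φ := by
  have hden : HasDerivAt (fun s => s ^ 2 * a ^ 2 + b ^ 2) (2 * Φ * a ^ 2) Φ := by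
    simpa using (((hasDerivAt_id Φ).pow 2).mul_const (a ^ 2)).add_const (b ^ 2)
  refine ((hasDerivAt_id' Φ).div hden hD).congr_deriv ?_
  ring

lemma hasDerivAt_div_energy_of_deriv_deriv_eq {u : ℝ → ℝ} {k x Φ : ℝ}
    (hu : DifferentiableAt ℝ u x) (hu' : DifferentiableAt ℝ (deriv u) x)
    (hode : deriv (deriv u) x = -(k * u x))
    (hD : Φ ^ 2 * u x ^ 2 + deriv u x ^ 2 ≠ 0) :
    HasDerivAt (fun t => Φ / (Φ ^ 2 * u t ^ 2 + deriv u t ^ 2))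
      (2 * Φ * u x * deriv u x * (k - Φ ^ 2) / (Φ ^ 2 * u x ^ 2 + deriv u x ^ 2) ^ 2) x := by
  have hden : HasDerivAt (fun t => Φ ^ 2 * u t ^ 2 + deriv u t ^ 2)
      (Φ ^ 2 * (2 * u x ^ 1 * deriv u x) + 2 * deriv u x ^ 1 * deriv (deriv u) x) x :=
    ((hu.hasDerivAt.pow 2).const_mul (Φ ^ 2)).add (hu'.hasDerivAt.pow 2)
  refine ((hasDerivAt_const x Φ).div hden hD).congr_deriv ?_
  rw [hode]
  ring

theorem stmt_16_general (h u : ℝ → ℝ)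
    (hu : ∀ x : ℝ, DifferentiableAt ℝ u x)
    (hu' : ∀ x : ℝ, DifferentiableAt ℝ (deriv u) x)
    (hode : ∀ x : ℝ, deriv (deriv u) x + h x * u x = 0)
    (hnt : ∀ x : ℝ, u x ≠ 0 ∨ deriv u x ≠ 0) :
    let Y : ℝ → ℝ → ℝ := fun x Φ => Φ / (Φ ^ 2 * (u x) ^ 2 + (deriv u x) ^ 2)
    ∀ x Φ : ℝ, 0 < Φ → Φ ^ 2 ≠ h x →
      (Φ / (h x - Φ ^ 2) * deriv (fun t => Y t Φ) x) ^ 2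
        + (Φ * deriv (fun s => Y x s) Φ) ^ 2 = (Y x Φ) ^ 2 := by
  intro Y x Φ hΦ hne
  have hD : Φ ^ 2 * u x ^ 2 + deriv u x ^ 2 ≠ 0 := (sq_mul_sq_add_sq_pos hΦ.ne' (hnt x)).ne'
  have hk : h x - Φ ^ 2 ≠ 0 := sub_ne_zero.mpr hne.symm
  have hu'' : deriv (deriv u) x = -(h x * u x) := eq_neg_of_add_eq_zero_left (hode x)
  rw [(hasDerivAt_div_energy_of_deriv_deriv_eq (hu x) (hu' x) hu'' hD).deriv,
    (hasDerivAt_div_sq_mul_sq_add_sq hD).deriv]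
  simp only [Y]
  field_simp
  ring

theorem stmt_16 (h u : ℝ → ℝ) (hh : Continuous h)
    (hu : ∀ x : ℝ, DifferentiableAt ℝ u x)
    (hu' : ∀ x : ℝ, DifferentiableAt ℝ (deriv u) x)
    (hode : ∀ x : ℝ, deriv (deriv u) x + h x * u x = 0)
    (hnt : ∀ x : ℝ, u x ≠ 0 ∨ deriv u x ≠ 0) :
    let Y : ℝ → ℝ → ℝ := fun x Φ => Φ / (Φ ^ 2 * (u x) ^ 2 + (deriv u x) ^ 2)
    ∀ x Φ : ℝ, 0 < Φ → Φ ^ 2 ≠ h x →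
      (Φ / (h x - Φ ^ 2) * deriv (fun t => Y t Φ) x) ^ 2
        + (Φ * deriv (fun s => Y x s) Φ) ^ 2 = (Y x Φ) ^ 2 :=
  stmt_16_general h u hu hu' hode hnt
end

section
/- Let h be continuous and u₁, u₂ linearly independent solutions of u'' + h·u = 0 with Wronskian W = u₁'u₂ − u₁u₂' ≠ 0. Define on {(x,Φ): Φ>0, Φ² ≠ h(x)} the map X(x,Φ) = W^{−1}(Φ²u₁u₂ + u₁'u₂')/(Φ²u₁² + u₁'²), Y(x,Φ) = Φ/(Φ²u₁² + u₁'²). Then the Jacobian determinant of (X,Y) with respect to (x,Φ) equals (Φ² − h(x))/(Φ²u₁(x)² + u₁'(x)²)², which is nonzero whenever Φ² ≠ h(x). -/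
/-!
Both components of the map are quotients by `D = Φ² u₁² + u₁'²`, which never vanishes since
`u₁` and `u₁'` have no common zero (the Wronskian is nonzero). Differentiating in `x` and
eliminating second derivatives by the equation `u'' = -h u` makes every `x`-derivative carry
the factor `Φ² - h(x)`; after clearing denominators, the Jacobian reduces to
`(Φ² - h(x)) / D²` using only `u₁'u₂ - u₁u₂' = W`.
-/

lemma sq_mul_sq_add_sq_ne_zero {Φ a a' b b' : ℝ} (hΦ : Φ ≠ 0) (hW : a' * b - a * b' ≠ 0) :
    Φ ^ 2 * a ^ 2 + a' ^ 2 ≠ 0 := by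
  intro h0
  have ha : a = 0 := by
    have : Φ ^ 2 * a ^ 2 = 0 := by nlinarith [sq_nonneg a', sq_nonneg (Φ * a)]
    simpa [hΦ] using this
  have ha' : a' = 0 := by simpa [ha] using h0
  exact hW (by rw [ha, ha']; ring)

section SecondOrderODE

variable {u v : ℝ → ℝ} {x k : ℝ}

lemma hasDerivAt_const_mul_mul_add_deriv_mul_deriv (c : ℝ)
    (hu : DifferentiableAt ℝ u x) (hu' : DifferentiableAt ℝ (deriv u) x)
    (hv : DifferentiableAt ℝ v x) (hv' : DifferentiableAt ℝ (deriv v) x)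
    (hu'' : deriv (deriv u) x = -(k * u x)) (hv'' : deriv (deriv v) x = -(k * v x)) :
    HasDerivAt (fun t => c * u t * v t + deriv u t * deriv v t)
      ((c - k) * (deriv u x * v x + u x * deriv v x)) x := by
  refine (((hu.hasDerivAt.const_mul c).mul hv.hasDerivAt).add
    (hu'.hasDerivAt.mul hv'.hasDerivAt)).congr_deriv ?_
  rw [hu'', hv'']
  ring

lemma hasDerivAt_const_mul_sq_add_deriv_sq (c : ℝ)
    (hu : DifferentiableAt ℝ u x) (hu' : DifferentiableAt ℝ (deriv u) x)
    (hu'' : deriv (deriv u) x = -(k * u x)) :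
    HasDerivAt (fun t => c * u t ^ 2 + deriv u t ^ 2) (2 * u x * deriv u x * (c - k)) x := by
  convert hasDerivAt_const_mul_mul_add_deriv_mul_deriv c hu hu' hu hu' hu'' hu'' using 1
  · ext t; ring
  · ring

end SecondOrderODE

theorem stmt_17_general (h u₁ u₂ : ℝ → ℝ) (W : ℝ)
    (hu₁ : ∀ x : ℝ, DifferentiableAt ℝ u₁ x)
    (hu₁' : ∀ x : ℝ, DifferentiableAt ℝ (deriv u₁) x)
    (hu₂ : ∀ x : ℝ, DifferentiableAt ℝ u₂ x)
    (hu₂' : ∀ x : ℝ, DifferentiableAt ℝ (deriv u₂) x)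
    (hode₁ : ∀ x : ℝ, deriv (deriv u₁) x + h x * u₁ x = 0)
    (hode₂ : ∀ x : ℝ, deriv (deriv u₂) x + h x * u₂ x = 0)
    (hW : ∀ x : ℝ, deriv u₁ x * u₂ x - u₁ x * deriv u₂ x = W)
    (hWne : W ≠ 0) :
    let X : ℝ → ℝ → ℝ := fun x Φ =>
      W⁻¹ * (Φ ^ 2 * u₁ x * u₂ x + deriv u₁ x * deriv u₂ x)
        / (Φ ^ 2 * (u₁ x) ^ 2 + (deriv u₁ x) ^ 2)
    let Y : ℝ → ℝ → ℝ := fun x Φ => Φ / (Φ ^ 2 * (u₁ x) ^ 2 + (deriv u₁ x) ^ 2)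
    ∀ x Φ : ℝ, 0 < Φ → Φ ^ 2 ≠ h x →
      deriv (fun t => X t Φ) x * deriv (fun s => Y x s) Φ
          - deriv (fun s => X x s) Φ * deriv (fun t => Y t Φ) x
        = (Φ ^ 2 - h x) / (Φ ^ 2 * (u₁ x) ^ 2 + (deriv u₁ x) ^ 2) ^ 2 ∧
      (Φ ^ 2 - h x) / (Φ ^ 2 * (u₁ x) ^ 2 + (deriv u₁ x) ^ 2) ^ 2 ≠ 0 := by
  intro X Y x Φ hΦ hne
  have hD := sq_mul_sq_add_sq_ne_zero (b := u₂ x) (b' := deriv u₂ x) hΦ.ne' (hW x ▸ hWne)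
  have hu₁'' : deriv (deriv u₁) x = -(h x * u₁ x) := eq_neg_of_add_eq_zero_left (hode₁ x)
  have hu₂'' : deriv (deriv u₂) x = -(h x * u₂ x) := eq_neg_of_add_eq_zero_left (hode₂ x)
  have hDx := hasDerivAt_const_mul_sq_add_deriv_sq (Φ ^ 2) (hu₁ x) (hu₁' x) hu₁''
  have hNx := (hasDerivAt_const_mul_mul_add_deriv_mul_deriv (Φ ^ 2) (hu₁ x) (hu₁' x) (hu₂ x)
    (hu₂' x) hu₁'' hu₂'').const_mul W⁻¹
  have hDΦ := ((hasDerivAt_pow 2 Φ).mul_const (u₁ x ^ 2)).add_const (deriv u₁ x ^ 2)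
  have hNΦ := ((((hasDerivAt_pow 2 Φ).mul_const (u₁ x)).mul_const (u₂ x)).add_const
    (deriv u₁ x * deriv u₂ x)).const_mul W⁻¹
  refine ⟨?_, div_ne_zero (sub_ne_zero.mpr hne) (pow_ne_zero 2 hD)⟩
  simp only [X, Y]
  rw [(hNx.fun_div hDx hD).deriv, ((hasDerivAt_id' Φ).fun_div hDΦ hD).deriv,
    (hNΦ.fun_div hDΦ hD).deriv, ((hasDerivAt_const x Φ).fun_div hDx hD).deriv]
  field_simp
  rw [← hW x]
  ring

theorem stmt_17 (h u₁ u₂ : ℝ → ℝ) (W : ℝ) (hh : Continuous h)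
    (hu₁ : ∀ x : ℝ, DifferentiableAt ℝ u₁ x)
    (hu₁' : ∀ x : ℝ, DifferentiableAt ℝ (deriv u₁) x)
    (hu₂ : ∀ x : ℝ, DifferentiableAt ℝ u₂ x)
    (hu₂' : ∀ x : ℝ, DifferentiableAt ℝ (deriv u₂) x)
    (hode₁ : ∀ x : ℝ, deriv (deriv u₁) x + h x * u₁ x = 0)
    (hode₂ : ∀ x : ℝ, deriv (deriv u₂) x + h x * u₂ x = 0)
    (hW : ∀ x : ℝ, deriv u₁ x * u₂ x - u₁ x * deriv u₂ x = W)
    (hWne : W ≠ 0) :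
    let X : ℝ → ℝ → ℝ := fun x Φ =>
      W⁻¹ * (Φ ^ 2 * u₁ x * u₂ x + deriv u₁ x * deriv u₂ x)
        / (Φ ^ 2 * (u₁ x) ^ 2 + (deriv u₁ x) ^ 2)
    let Y : ℝ → ℝ → ℝ := fun x Φ => Φ / (Φ ^ 2 * (u₁ x) ^ 2 + (deriv u₁ x) ^ 2)
    ∀ x Φ : ℝ, 0 < Φ → Φ ^ 2 ≠ h x →
      deriv (fun t => X t Φ) x * deriv (fun s => Y x s) Φ
          - deriv (fun s => X x s) Φ * deriv (fun t => Y t Φ) x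
        = (Φ ^ 2 - h x) / (Φ ^ 2 * (u₁ x) ^ 2 + (deriv u₁ x) ^ 2) ^ 2 ∧
      (Φ ^ 2 - h x) / (Φ ^ 2 * (u₁ x) ^ 2 + (deriv u₁ x) ^ 2) ^ 2 ≠ 0 :=
  stmt_17_general h u₁ u₂ W hu₁ hu₁' hu₂ hu₂' hode₁ hode₂ hW hWne
end

section
/- For any metric of the form g = ((h(x) − Φ²)²dx² + dΦ²)/Φ² on the region {(x,Φ) : Φ > 0, Φ² ≠ h(x)} with h of class C², the Gaussian curvature K = R_{xΦxΦ}/(g_{xx}g_{ΦΦ}) equals −1 at every point; concretely, with g_{xx} = (h(x)−Φ²)²/Φ², g_{ΦΦ} = 1/Φ², the Riemann curvature component computed from the Christoffel symbols Γ^x_{xx} = h'/(h−Φ²), Γ^x_{xΦ} = (Φ²+h)/(Φ(Φ²−h)), Γ^Φ_{xx} = (h²−Φ⁴)/Φ, Γ^Φ_{ΦΦ} = −1/Φ satisfies R_{xΦxΦ} = −(h(x)−Φ²)²/Φ⁴. -/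
theorem stmt_19 (h : ℝ → ℝ) (hh : ContDiff ℝ 2 h) :
    ∀ x Φ : ℝ, 0 < Φ → Φ ^ 2 ≠ h x →
      let gxx : ℝ := (h x - Φ ^ 2) ^ 2 / Φ ^ 2
      let gΦΦ : ℝ := 1 / Φ ^ 2
      -- Christoffel symbols as functions of the coordinates (t, s) = (x, Φ)
      let Γx_xx : ℝ → ℝ → ℝ := fun t s => deriv h t / (h t - s ^ 2)
      let Γx_xΦ : ℝ → ℝ → ℝ := fun t s => (s ^ 2 + h t) / (s * (s ^ 2 - h t))
      let Γx_ΦΦ : ℝ → ℝ → ℝ := fun _ _ => 0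
      let ΓΦ_xx : ℝ → ℝ → ℝ := fun t s => ((h t) ^ 2 - s ^ 4) / s
      let ΓΦ_xΦ : ℝ → ℝ → ℝ := fun _ _ => 0
      let ΓΦ_ΦΦ : ℝ → ℝ → ℝ := fun _ s => -(1 / s)
      -- R^x_{ΦxΦ} = ∂ₓ Γ^x_{ΦΦ} − ∂_Φ Γ^x_{Φx} + Γ^x_{mx}Γ^m_{ΦΦ} − Γ^x_{mΦ}Γ^m_{Φx}
      let Rup : ℝ :=
        deriv (fun t => Γx_ΦΦ t Φ) x - deriv (fun s => Γx_xΦ x s) Φ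
          + (Γx_xx x Φ * Γx_ΦΦ x Φ + Γx_xΦ x Φ * ΓΦ_ΦΦ x Φ)
          - (Γx_xΦ x Φ * Γx_xΦ x Φ + Γx_ΦΦ x Φ * ΓΦ_xΦ x Φ)
      let RxΦxΦ : ℝ := gxx * Rup
      RxΦxΦ = -((h x - Φ ^ 2) ^ 2) / Φ ^ 4 ∧ RxΦxΦ / (gxx * gΦΦ) = -1 := by
  intro x Φ hΦ hne
  intro gxx gΦΦ Γx_xx Γx_xΦ Γx_ΦΦ ΓΦ_xx ΓΦ_xΦ ΓΦ_ΦΦ Rup RxΦxΦ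
  have hΦ0 : Φ ≠ 0 := ne_of_gt hΦ
  have hsub : Φ ^ 2 - h x ≠ 0 := sub_ne_zero.mpr hne
  have hsub' : h x - Φ ^ 2 ≠ 0 := sub_ne_zero.mpr (Ne.symm hne)
  have hden : Φ * (Φ ^ 2 - h x) ≠ 0 := mul_ne_zero hΦ0 hsub
  have h1 : HasDerivAt (fun s : ℝ => s ^ 2 + h x) (2 * Φ) Φ := by
    simpa using (hasDerivAt_pow 2 Φ).add_const (h x)
  have h2 : HasDerivAt (fun s : ℝ => s * (s ^ 2 - h x))
      (1 * (Φ ^ 2 - h x) + Φ * (2 * Φ)) Φ := by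
    exact (hasDerivAt_id Φ).mul (by simpa using (hasDerivAt_pow 2 Φ).sub_const (h x))
  have hd : deriv (fun s => Γx_xΦ x s) Φ =
      (2 * Φ * (Φ * (Φ ^ 2 - h x)) - (Φ ^ 2 + h x) * (1 * (Φ ^ 2 - h x) + Φ * (2 * Φ)))
        / (Φ * (Φ ^ 2 - h x)) ^ 2 := (h1.div h2 hden).deriv
  have hRup : Rup = deriv (fun t => Γx_ΦΦ t Φ) x - deriv (fun s => Γx_xΦ x s) Φ
          + (Γx_xx x Φ * Γx_ΦΦ x Φ + Γx_xΦ x Φ * ΓΦ_ΦΦ x Φ)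
          - (Γx_xΦ x Φ * Γx_xΦ x Φ + Γx_ΦΦ x Φ * ΓΦ_xΦ x Φ) := rfl
  have hconst : deriv (fun t => Γx_ΦΦ t Φ) x = 0 := by
    simp [Γx_ΦΦ]
  have key : RxΦxΦ = -((h x - Φ ^ 2) ^ 2) / Φ ^ 4 := by
    show gxx * Rup = _
    rw [hRup, hconst, hd]
    show (h x - Φ ^ 2) ^ 2 / Φ ^ 2 *
      (0 - _ + (deriv h x / (h x - Φ ^ 2) * 0 + (Φ ^ 2 + h x) / (Φ * (Φ ^ 2 - h x)) * -(1 / Φ))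
        - ((Φ ^ 2 + h x) / (Φ * (Φ ^ 2 - h x)) * ((Φ ^ 2 + h x) / (Φ * (Φ ^ 2 - h x))) + 0 * 0)) = _
    field_simp
    ring
  refine ⟨key, ?_⟩
  rw [key]
  show -((h x - Φ ^ 2) ^ 2) / Φ ^ 4 / ((h x - Φ ^ 2) ^ 2 / Φ ^ 2 * (1 / Φ ^ 2)) = -1
  field_simp
end
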